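/- Let k be a field, R the quotient of a polynomial ring over k by a homogeneous prime ideal, m its maximal homogeneous ideal, and assume depth(R_m) ≥ 2. Let I ⊆ R be a homogeneous ideal with ht I ≥ 1. Then there exists an integer e > 0 (any integer exceeding the degrees of a set of homogeneous generators of I and the Swanson linear bound for I) such that for all n ≥ 1: λ(H^0_m(R/I^n)) = Σ_{m=0}^{en} dim_k ((I^n)^*)_m − Σ_{m=0}^{en} dim_k (I^n)_m, where (I^n)^* = (I^n : m^∞) is the saturation of I^n. -/

import Mathlib

/-!
STATEMENT 13: Let `k` be a field, `R` the quotient of a polynomial ring over `k` by a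
homogeneous prime ideal, `m` its maximal homogeneous ideal, and assume `depth(R_m) ≥ 2`.
Let `I ⊆ R` be a homogeneous ideal with `ht I ≥ 1`.  Then there exists an integer `e > 0`
(any integer exceeding the degrees of a set of homogeneous generators of `I` and the Swanson
linear bound for `I`) such that for all `n ≥ 1`:
`λ(H⁰_m(R/Iⁿ)) = Σ_{m=0}^{en} dim_k ((Iⁿ)^*)_m − Σ_{m=0}^{en} dim_k (Iⁿ)_m`,
where `(Iⁿ)^* = (Iⁿ : m^∞)` is the saturation of `Iⁿ`.

`R` is modelled as a finitely generated standard ℕ-graded `k`-algebra domain; `m` is the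
irrelevant ideal; `depth(R_m) ≥ 2` is expressed by a length-two regular sequence on `R`
inside `m`; `H⁰_m` is the `m`-power-torsion functor and `λ` is the `k`-dimension.
-/

open Filter

/-- The zeroth local cohomology module `H⁰_J(M) = {x ∈ M | ∃ n, Jⁿ • x = 0}`. -/
noncomputable def H0 {R M : Type*} [CommRing R] [AddCommGroup M] [Module R M]
    (J : Ideal R) : Submodule R M :=
  ⨆ n : ℕ, Submodule.torsionBySet R M (J ^ n : Ideal R)

/-- The saturation `(I : J^∞) = ⋃ j (I : J^j)` of `I` with respect to `J`. -/
noncomputable def sat {R : Type*} [CommRing R] (I J : Ideal R) : Ideal R :=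
  ⨆ j : ℕ, Submodule.colon (I : Submodule R R) (J ^ j : Ideal R)

/-- Height of an ideal: the infimum of the heights of the primes containing it. -/
noncomputable def idealHeight {R : Type*} [CommRing R] (I : Ideal R) : ℕ∞ :=
  ⨅ (p : PrimeSpectrum R) (_ : I ≤ p.asIdeal), Order.height p

/-- The degree-`i` graded piece of an ideal `N` of a graded algebra, as a `k`-submodule. -/
noncomputable def piece {k R : Type*} [Field k] [CommRing R] [Algebra k R]
    (𝒜 : ℕ → Submodule k R) (N : Ideal R) (i : ℕ) : Submodule k R :=
  (Submodule.restrictScalars k (N : Submodule R R)) ⊓ 𝒜 i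

/-!
Since `R` is Noetherian, the ideal `⊕ₙ (Iⁿ ∩ (Iⁿ⁺¹ : m^∞)) tⁿ` of the Rees algebra `R[It]` is
finitely generated. Its finitely many generators have bounded degrees and a common saturation
exponent `N`; together with the fact that a homogeneous component of degree `≥ d a + N` of an
element of `Iᵃ` lies in `mᴺ Iᵃ` (when `I` is generated in degrees `≤ d`), this shows that a
homogeneous element of `Iⁿ ∩ (Iⁿ⁺¹ : m^∞)` of degree `≥ d n + C` lies in `Iⁿ⁺¹`. By induction on
`n`, `(Iⁿ)^*` and `Iⁿ` agree in degrees `≥ d n + C`, so `H⁰_m(R/Iⁿ) = (Iⁿ)^*/Iⁿ` is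
`⊕_{i ≤ e n} ((Iⁿ)^*)ᵢ / (Iⁿ)ᵢ`.
-/

open DirectSum Polynomial Pointwise
open scoped HomogeneousIdeal

section Saturation

variable {R : Type*} [CommRing R]

theorem mem_sat_iff {P J : Ideal R} {x : R} :
    x ∈ sat P J ↔ ∃ N : ℕ, ∀ a ∈ J ^ N, x * a ∈ P := by
  have hmono : Monotone fun j : ℕ => Submodule.colon (P : Submodule R R) (J ^ j : Ideal R) :=
    fun _ _ h => Submodule.colon_mono le_rfl (Ideal.pow_le_pow_right h)
  simp only [sat, Submodule.mem_iSup_of_directed _ hmono.directed_le, Submodule.mem_colon,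
    smul_eq_mul, SetLike.mem_coe]

theorem le_sat (P J : Ideal R) : P ≤ sat P J :=
  fun _ hx => mem_sat_iff.mpr ⟨0, fun a _ => P.mul_mem_right a hx⟩

theorem sat_mono {P Q : Ideal R} (h : P ≤ Q) (J : Ideal R) : sat P J ≤ sat Q J := by
  intro x hx
  obtain ⟨N, hN⟩ := mem_sat_iff.mp hx
  exact mem_sat_iff.mpr ⟨N, fun a ha => h (hN a ha)⟩

theorem mul_mem_sat {P Q J : Ideal R} {x y : R} (hx : x ∈ Q) (hy : y ∈ sat P J) :
    x * y ∈ sat (Q * P) J := by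
  obtain ⟨N, hN⟩ := mem_sat_iff.mp hy
  exact mem_sat_iff.mpr ⟨N, fun a ha => mul_assoc x y a ▸ Ideal.mul_mem_mul hx (hN a ha)⟩

theorem exists_pow_forall_mul_mem_of_mem_sat {ι : Type*} (s : Finset ι) (x : ι → R)
    (P : ι → Ideal R) (J : Ideal R) (h : ∀ i ∈ s, x i ∈ sat (P i) J) :
    ∃ N : ℕ, ∀ i ∈ s, ∀ a ∈ J ^ N, x i * a ∈ P i := by
  choose! N hN using fun i hi => mem_sat_iff.mp (h i hi)
  exact ⟨s.sup N, fun i hi a ha =>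
    hN i hi a (Ideal.pow_le_pow_right (Finset.le_sup hi) ha)⟩

theorem mk_mem_H0_iff {P J : Ideal R} {x : R} :
    Ideal.Quotient.mk P x ∈ H0 (M := R ⧸ P) J ↔ x ∈ sat P J := by
  have hmono : Monotone fun N : ℕ => Submodule.torsionBySet R (R ⧸ P) (J ^ N : Ideal R) :=
    fun _ _ h => Submodule.torsionBySet_le_torsionBySet_of_subset (Ideal.pow_le_pow_right h)
  rw [H0, Submodule.mem_iSup_of_directed _ hmono.directed_le, mem_sat_iff]
  refine exists_congr fun N => ?_
  simp [Submodule.mem_torsionBySet_iff, Algebra.smul_def, ← map_mul,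
    Ideal.Quotient.eq_zero_iff_mem, mul_comm]

end Saturation

section GradedRing

variable {A σ : Type*} [CommRing A] [SetLike σ A] [AddSubgroupClass σ A]
variable (𝒜 : ℕ → σ) [GradedRing 𝒜]

theorem Ideal.IsHomogeneous.colon {P J : Ideal A} (hP : P.IsHomogeneous 𝒜)
    (hJ : J.IsHomogeneous 𝒜) :
    (Submodule.colon (P : Submodule A A) (J : Set A)).IsHomogeneous 𝒜 := by
  classical
  intro i r hr
  rw [Submodule.mem_colon] at hr ⊢
  intro p hp
  rw [smul_eq_mul, ← DirectSum.sum_support_decompose 𝒜 p, Finset.mul_sum]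
  refine P.sum_mem fun t _ => ?_
  -- `rᵢ pₜ` is the degree-`(i + t)` component of `r pₜ ∈ P`.
  have h := hP (i + t) (hr _ (hJ t hp))
  rwa [smul_eq_mul, DirectSum.coe_decompose_mul_of_right_mem_of_le 𝒜 (SetLike.coe_mem _)
    (Nat.le_add_left t i), Nat.add_sub_cancel] at h

theorem Ideal.IsHomogeneous.pow {P : Ideal A} (hP : P.IsHomogeneous 𝒜) (n : ℕ) :
    (P ^ n).IsHomogeneous 𝒜 := by
  induction n with
  | zero => simpa using Ideal.IsHomogeneous.top 𝒜
  | succ n ih => simpa [pow_succ] using ih.mul hP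

theorem Ideal.IsHomogeneous.sat {P J : Ideal A} (hP : P.IsHomogeneous 𝒜)
    (hJ : J.IsHomogeneous 𝒜) : (sat P J).IsHomogeneous 𝒜 :=
  Ideal.IsHomogeneous.iSup fun j => hP.colon 𝒜 (hJ.pow 𝒜 j)

theorem exists_decompose_eq_zero_of_lt {ι : Type*} (s : Finset ι) (x : ι → A) :
    ∃ Δ : ℕ, ∀ j ∈ s, ∀ δ, Δ < δ → (decompose 𝒜 (x j) δ : A) = 0 := by
  classical
  refine ⟨s.sup fun j => (decompose 𝒜 (x j)).support.sup id, fun j hj δ hδ => ?_⟩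
  by_contra h
  have hδ_supp : δ ∈ (decompose 𝒜 (x j)).support := by
    rw [DFinsupp.mem_support_iff]; exact fun h0 => h (by simp [h0])
  exact absurd ((Finset.le_sup (f := id) hδ_supp).trans
    (Finset.le_sup (f := fun j => (decompose 𝒜 (x j)).support.sup id) hj)) (not_le.mpr hδ)

theorem Ideal.IsHomogeneous.exists_finset_span_eq {I : Ideal A} (hI : I.IsHomogeneous 𝒜)
    (hfg : I.FG) :
    ∃ (s : Finset A) (d : ℕ), Ideal.span (s : Set A) = I ∧ ∀ f ∈ s, ∃ δ ≤ d, f ∈ 𝒜 δ := by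
  classical
  obtain ⟨F, rfl⟩ := hfg
  obtain ⟨d, hd⟩ := exists_decompose_eq_zero_of_lt 𝒜 F id
  refine ⟨F.biUnion fun g => (decompose 𝒜 g).support.image fun δ => (decompose 𝒜 g δ : A),
    d, le_antisymm ?_ ?_, ?_⟩
  · rw [Ideal.span_le]
    intro f hf
    simp only [Finset.coe_biUnion, Set.mem_iUnion, Finset.mem_coe, Finset.mem_image] at hf
    obtain ⟨g, hg, δ, _, rfl⟩ := hf
    exact hI δ (Ideal.subset_span hg)
  · rw [Ideal.span_le]
    intro g hg
    rw [SetLike.mem_coe, ← DirectSum.sum_support_decompose 𝒜 g]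
    refine Ideal.sum_mem _ fun δ hδ => Ideal.subset_span ?_
    simp only [Finset.coe_biUnion, Set.mem_iUnion, Finset.mem_coe, Finset.mem_image]
    exact ⟨g, hg, δ, hδ, rfl⟩
  · intro f hf
    simp only [Finset.mem_biUnion, Finset.mem_image] at hf
    obtain ⟨g, hg, δ, hδ, rfl⟩ := hf
    refine ⟨δ, not_lt.mp fun hlt => ?_, SetLike.coe_mem _⟩
    rw [DFinsupp.mem_support_iff] at hδ
    exact hδ (Subtype.ext (hd g hg δ hlt))

theorem coe_decompose_sum_apply {ι : Type*} (s : Finset ι) (f : ι → A) (i : ℕ) :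
    (decompose 𝒜 (∑ j ∈ s, f j) i : A) = ∑ j ∈ s, (decompose 𝒜 (f j) i : A) := by
  simp [decompose_sum]

theorem exists_mem_grade_of_mem_pow {T : Set A} {d : ℕ} (hT : ∀ f ∈ T, ∃ δ ≤ d, f ∈ 𝒜 δ)
    (a : ℕ) : ∀ f ∈ T ^ a, ∃ δ ≤ d * a, f ∈ 𝒜 δ := by
  induction a with
  | zero =>
    rintro f hf
    rw [pow_zero, Set.mem_one] at hf
    exact ⟨0, le_rfl, hf ▸ SetLike.one_mem_graded 𝒜⟩
  | succ a ih =>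
    rintro _ ⟨f, hf, g, hg, rfl⟩
    obtain ⟨δf, hδf, hf⟩ := ih f hf
    obtain ⟨δg, hδg, hg⟩ := hT g hg
    exact ⟨δf + δg, by rw [Nat.mul_succ]; omega, SetLike.mul_mem_graded hf hg⟩

end GradedRing

theorem finrank_finset_sup_of_iSupIndep {k M ι : Type*} [Field k] [AddCommGroup M] [Module k M]
    {p : ι → Submodule k M} (hp : iSupIndep p) [∀ i, FiniteDimensional k (p i)]
    (s : Finset ι) : Module.finrank k ↥(s.sup p) = ∑ i ∈ s, Module.finrank k (p i) := by
  classical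
  induction s using Finset.induction_on with
  | empty => simp
  | insert a t ha ih =>
    have hdisj : p a ⊓ t.sup p = ⊥ := by
      rw [Finset.sup_eq_iSup]
      exact (hp.disjoint_biSup (y := (t : Set ι)) ha).eq_bot
    rw [Finset.sup_insert, Finset.sum_insert ha, ← ih, ← add_zero (Module.finrank k _),
      ← finrank_bot k M, ← hdisj, Submodule.finrank_sup_add_finrank_inf_eq]

section Rees

variable {R : Type*} [CommRing R]

/-- The ideal `⊕ₙ (Iⁿ ∩ (Iⁿ⁺¹ : J^∞)) tⁿ` of the Rees algebra `R[It]`. -/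
def reesSat (I J : Ideal R) : Ideal (reesAlgebra I) where
  carrier := {s | ∀ n, (s : R[X]).coeff n ∈ sat (I ^ (n + 1)) J}
  zero_mem' n := by simp
  add_mem' ha hb n := by simpa using add_mem (ha n) (hb n)
  smul_mem' c s hs n := by
    rw [smul_eq_mul, MulMemClass.coe_mul, coeff_mul]
    refine sum_mem fun p hp => ?_
    have h := mul_mem_sat (c.2 p.1) (hs p.2)
    rwa [← pow_add, show p.1 + (p.2 + 1) = n + 1 by
      have := Finset.HasAntidiagonal.mem_antidiagonal.mp hp; omega] at h

theorem mem_reesSat_iff {I J : Ideal R} {s : reesAlgebra I} :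
    s ∈ reesSat I J ↔ ∀ n, (s : R[X]).coeff n ∈ sat (I ^ (n + 1)) J := Iff.rfl

end Rees

section StandardGraded

variable {k R : Type*} [Field k] [CommRing R] [Algebra k R]
variable (𝒜 : ℕ → Submodule k R) [GradedAlgebra 𝒜]

theorem exists_mem_grade_pow_of_mem_closure {y : R} (hy : y ∈ Submonoid.closure (𝒜 1 : Set R)) :
    ∃ ℓ, y ∈ 𝒜 ℓ ∧ y ∈ 𝒜 1 ^ ℓ := by
  induction hy using Submonoid.closure_induction with
  | mem a ha => exact ⟨1, ha, by rwa [pow_one]⟩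
  | one => exact ⟨0, SetLike.one_mem_graded 𝒜, by
      rw [pow_zero]; exact Submodule.mem_one.mpr ⟨1, map_one _⟩⟩
  | mul a b _ _ iha ihb =>
    obtain ⟨ℓa, ha, ha'⟩ := iha
    obtain ⟨ℓb, hb, hb'⟩ := ihb
    exact ⟨ℓa + ℓb, SetLike.mul_mem_graded ha hb,
      pow_add (𝒜 1) ℓa ℓb ▸ Submodule.mul_mem_mul ha' hb'⟩

theorem grade_le_pow_grade_one (hstd : Algebra.adjoin k (𝒜 1 : Set R) = ⊤) (i : ℕ) :
    𝒜 i ≤ 𝒜 1 ^ i := by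
  intro x hx
  suffices ∀ y ∈ Submodule.span k (Submonoid.closure (𝒜 1 : Set R) : Set R),
      (decompose 𝒜 y i : R) ∈ 𝒜 1 ^ i by
    simpa [decompose_of_mem_same 𝒜 hx] using
      this x (by rw [← Algebra.adjoin_eq_span, hstd]; trivial)
  intro y hy
  induction hy using Submodule.span_induction with
  | mem y hy =>
    obtain ⟨ℓ, hℓ, hy'⟩ := exists_mem_grade_pow_of_mem_closure 𝒜 hy
    by_cases h : ℓ = i
    · subst h; rwa [decompose_of_mem_same 𝒜 hℓ]
    · rw [decompose_of_mem_ne 𝒜 hℓ h]; exact zero_mem _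
  | zero => simp
  | add y z _ _ hy hz => simpa using add_mem hy hz
  | smul c y _ hy => rw [decompose_smul]; exact Submodule.smul_mem _ c hy

theorem mem_irrelevant_pow_of_mem_grade (hstd : Algebra.adjoin k (𝒜 1 : Set R) = ⊤) {t N : ℕ}
    (h : N ≤ t) {x : R} (hx : x ∈ 𝒜 t) :
    x ∈ 𝒜₊.toIdeal ^ N := by
  rcases Nat.eq_zero_or_pos N with rfl | hN
  · simp
  have h1 : 𝒜 1 ≤ 𝒜₊.toIdeal.restrictScalars k :=
    fun y hy => HomogeneousIdeal.mem_irrelevant_of_mem 𝒜 one_pos hy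
  have h2 := (pow_le_pow_left' h1 t) (grade_le_pow_grade_one 𝒜 hstd t hx)
  rw [← Submodule.restrictScalars_pow (by omega)] at h2
  exact Ideal.pow_le_pow_right h h2

theorem grade_one_le_span_decompose (hstd : Algebra.adjoin k (𝒜 1 : Set R) = ⊤) {F : Set R}
    (hF : Ideal.span F = 𝒜₊.toIdeal) :
    𝒜 1 ≤ Submodule.span k ((fun f => (decompose 𝒜 f 1 : R)) '' F) := by
  intro x hx
  suffices ∀ y ∈ Ideal.span F,
      (decompose 𝒜 y 1 : R) ∈ Submodule.span k ((fun f => (decompose 𝒜 f 1 : R)) '' F) by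
    simpa [decompose_of_mem_same 𝒜 hx] using
      this x (hF ▸ HomogeneousIdeal.mem_irrelevant_of_mem 𝒜 one_pos hx)
  intro y hy
  induction hy using Submodule.span_induction with
  | mem f hf => exact Submodule.subset_span ⟨f, hf, rfl⟩
  | zero => simp
  | add y z _ _ hy hz => simpa using add_mem hy hz
  | smul r y hy ih =>
    -- `(r y)₁ = r₀ y₁ + r₁ y₀`, where `y₀ = 0` as `y ∈ m` and `r₀` is a scalar.
    have hy0 : (decompose 𝒜 y 0 : R) = 0 := by
      have : y ∈ 𝒜₊.toIdeal := hF ▸ hy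
      exact (HomogeneousIdeal.mem_irrelevant_iff 𝒜 y).mp this
    obtain ⟨c, hc⟩ := Submodule.mem_one.mp
      (grade_le_pow_grade_one 𝒜 hstd 0 (decompose 𝒜 r 0).2)
    rw [smul_eq_mul, decompose_mul, coe_mul_apply_eq_sum_antidiagonal,
      Finset.Nat.sum_antidiagonal_succ]
    simp only [Finset.Nat.antidiagonal_zero, Finset.sum_singleton, hy0, mul_zero, add_zero,
      ← hc, ← Algebra.smul_def]
    exact Submodule.smul_mem _ c ih

theorem finiteDimensional_grade [IsNoetherianRing R]
    (hstd : Algebra.adjoin k (𝒜 1 : Set R) = ⊤) (i : ℕ) : FiniteDimensional k (𝒜 i) := by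
  obtain ⟨F, hF⟩ := (𝒜₊.toIdeal).fg_of_isNoetherianRing
  have : FiniteDimensional k (𝒜 1) :=
    have := FiniteDimensional.span_of_finite k (F.finite_toSet.image fun f => (decompose 𝒜 f 1 : R))
    Submodule.finiteDimensional_of_le (grade_one_le_span_decompose 𝒜 hstd hF)
  have : FiniteDimensional k (𝒜 1 ^ i : Submodule k R) :=
    (Submodule.fg_iff_finiteDimensional _).mp
      (((Submodule.fg_iff_finiteDimensional _).mpr this).pow i)
  exact Submodule.finiteDimensional_of_le (grade_le_pow_grade_one 𝒜 hstd i)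

theorem decompose_mem_irrelevant_pow_mul_span (hstd : Algebra.adjoin k (𝒜 1 : Set R) = ⊤)
    {T : Set R} {D N : ℕ} (hT : ∀ f ∈ T, ∃ δ ≤ D, f ∈ 𝒜 δ) {x : R} (hx : x ∈ Ideal.span T)
    {j : ℕ} (hj : D + N ≤ j) :
    (decompose 𝒜 x j : R) ∈ 𝒜₊.toIdeal ^ N * Ideal.span T := by
  suffices ∀ r, (decompose 𝒜 (r * x) j : R) ∈
      𝒜₊.toIdeal ^ N * Ideal.span T by simpa using this 1
  induction hx using Submodule.span_induction with
  | mem f hf =>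
    intro r
    obtain ⟨δ, hδ, hf'⟩ := hT f hf
    rw [coe_decompose_mul_of_right_mem_of_le 𝒜 hf' (by omega)]
    exact Ideal.mul_mem_mul (mem_irrelevant_pow_of_mem_grade 𝒜 hstd (by omega) (SetLike.coe_mem _))
      (Ideal.subset_span hf)
  | zero => simp
  | add y z _ _ hy hz => intro r; simpa [mul_add] using add_mem (hy r) (hz r)
  | smul s y _ hy => intro r; simpa [mul_assoc] using hy (r * s)

theorem decompose_mul_mem_span_pow_mul (hstd : Algebra.adjoin k (𝒜 1 : Set R) = ⊤)
    {T : Set R} {d : ℕ} (hT : ∀ f ∈ T, ∃ δ ≤ d, f ∈ 𝒜 δ) {K : Ideal R}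
    (hK : K.IsHomogeneous 𝒜) {a N Δ i : ℕ} {f y : R} (hf : f ∈ Ideal.span T ^ a)
    (hy : ∀ b ∈ 𝒜₊.toIdeal ^ N, y * b ∈ K)
    (hyΔ : ∀ δ, Δ < δ → (decompose 𝒜 y δ : R) = 0) (hi : d * a + N + Δ ≤ i) :
    (decompose 𝒜 (f * y) i : R) ∈ Ideal.span T ^ a * K := by
  classical
  have hspan : Ideal.span T ^ a = Ideal.span (T ^ a) := by
    rw [Ideal.span, Submodule.span_pow]
  have hcolon := (hK.colon 𝒜 (𝒜₊.isHomogeneous.pow 𝒜 N))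
  rw [← sum_support_decompose 𝒜 y, Finset.mul_sum, coe_decompose_sum_apply]
  refine Ideal.sum_mem _ fun δ hδ => ?_
  have hδΔ : δ ≤ Δ := not_lt.mp fun h => (DFinsupp.mem_support_iff.mp hδ) (Subtype.ext (hyΔ δ h))
  rw [coe_decompose_mul_of_right_mem_of_le 𝒜 (SetLike.coe_mem _) (by omega)]
  have hfδ := decompose_mem_irrelevant_pow_mul_span 𝒜 hstd (exists_mem_grade_of_mem_pow 𝒜 hT a)
    (hspan ▸ hf) (N := N) (j := i - δ) (by omega)
  have hyδ := Submodule.mem_colon.mp (hcolon δ (Submodule.mem_colon.mpr hy))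
  rw [← hspan] at hfδ
  refine Submodule.mul_induction_on hfδ (fun b hb g hg => ?_) fun u v hu hv => ?_
  · rw [mul_comm b g, mul_assoc, mul_comm b]
    exact Ideal.mul_mem_mul hg (hyδ b hb)
  · rw [add_mul]; exact add_mem hu hv

theorem exists_mem_pow_succ_of_mem_sat [IsNoetherianRing R]
    (hstd : Algebra.adjoin k (𝒜 1 : Set R) = ⊤) {T : Set R} {d : ℕ}
    (hT : ∀ f ∈ T, ∃ δ ≤ d, f ∈ 𝒜 δ) :
    ∃ C, ∀ n i, d * n + C ≤ i → ∀ x ∈ 𝒜 i, x ∈ Ideal.span T ^ n →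
      x ∈ sat (Ideal.span T ^ (n + 1)) (𝒜₊).toIdeal →
      x ∈ Ideal.span T ^ (n + 1) := by
  classical
  set m := 𝒜₊.toIdeal
  set I := Ideal.span T
  have hI : I.IsHomogeneous 𝒜 :=
    Ideal.homogeneous_span 𝒜 T fun f hf => (hT f hf).imp fun _ h => h.2
  obtain ⟨G, hG⟩ := (reesSat I m).fg_of_isNoetherianRing
  have hGsat : ∀ g ∈ G, ∀ b, (g : R[X]).coeff b ∈ sat (I ^ (b + 1)) m := fun g hg =>
    mem_reesSat_iff.mp (hG ▸ Ideal.subset_span hg)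
  -- A common saturation exponent `N` and degree bound `Δ` for all coefficients of the generators.
  set S := G ×ˢ G.biUnion fun g => (g : R[X]).support
  have hS : ∀ g ∈ G, ∀ b, (g : R[X]).coeff b = 0 ∨ (g, b) ∈ S := by
    intro g hg b
    by_cases hb : b ∈ (g : R[X]).support
    · exact Or.inr (Finset.mem_product.mpr ⟨hg, Finset.mem_biUnion.mpr ⟨g, hg, hb⟩⟩)
    · exact Or.inl (notMem_support_iff.mp hb)
  obtain ⟨N, hN⟩ := exists_pow_forall_mul_mem_of_mem_sat S (fun p => (p.1 : R[X]).coeff p.2)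
    (fun p => I ^ (p.2 + 1)) m fun p hp => hGsat p.1 (Finset.mem_product.mp hp).1 p.2
  obtain ⟨Δ, hΔ⟩ := exists_decompose_eq_zero_of_lt 𝒜 S fun p => (p.1 : R[X]).coeff p.2
  have hGN : ∀ g ∈ G, ∀ b, ∀ a ∈ m ^ N, (g : R[X]).coeff b * a ∈ I ^ (b + 1) :=
    fun g hg b a ha => (hS g hg b).elim (fun h => by simp [h]) fun h => hN _ h a ha
  have hGΔ : ∀ g ∈ G, ∀ b δ, Δ < δ → (decompose 𝒜 ((g : R[X]).coeff b) δ : R) = 0 :=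
    fun g hg b δ hδ => (hS g hg b).elim (fun h => by simp [h]) fun h => hΔ _ h δ hδ
  refine ⟨N + Δ, fun n i hi x hx hxn hxsat => ?_⟩
  have hmon : (⟨monomial n x, reesAlgebra.monomial_mem.mpr hxn⟩ : reesAlgebra I) ∈
      Ideal.span (G : Set (reesAlgebra I)) := by
    rw [hG, mem_reesSat_iff]
    intro b
    rw [coeff_monomial]
    split_ifs with h
    · exact h ▸ hxsat
    · exact zero_mem _
  obtain ⟨c, -, hc⟩ := Submodule.mem_span_finset.mp hmon
  have hx_eq : x = ∑ g ∈ G, ∑ p ∈ Finset.HasAntidiagonal.antidiagonal n,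
      (c g : R[X]).coeff p.1 * (g : R[X]).coeff p.2 := by
    simpa [coeff_mul, finsetSum_coeff] using (congrArg (fun s : reesAlgebra I =>
      (s : R[X]).coeff n) hc).symm
  rw [← decompose_of_mem_same 𝒜 hx, hx_eq]
  simp only [coe_decompose_sum_apply]
  refine sum_mem fun g hg => sum_mem fun p hp => ?_
  have hp' := Finset.HasAntidiagonal.mem_antidiagonal.mp hp
  have hdp : d * p.1 ≤ d * n := Nat.mul_le_mul_left d (by omega)
  have h := decompose_mul_mem_span_pow_mul 𝒜 hstd hT (hI.pow 𝒜 (p.2 + 1))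
    ((mem_reesAlgebra_iff I _).mp (c g).2 p.1) (hGN g hg p.2) (hGΔ g hg p.2) (i := i) (by omega)
  rwa [← pow_add, show p.1 + (p.2 + 1) = n + 1 by omega] at h

theorem exists_mem_pow_of_mem_sat [IsNoetherianRing R]
    (hstd : Algebra.adjoin k (𝒜 1 : Set R) = ⊤) {T : Set R} {d : ℕ}
    (hT : ∀ f ∈ T, ∃ δ ≤ d, f ∈ 𝒜 δ) :
    ∃ C, ∀ n i, d * n + C ≤ i → ∀ x ∈ 𝒜 i,
      x ∈ sat (Ideal.span T ^ n) (𝒜₊).toIdeal →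
      x ∈ Ideal.span T ^ n := by
  obtain ⟨C, hC⟩ := exists_mem_pow_succ_of_mem_sat 𝒜 hstd hT
  refine ⟨C, fun n => ?_⟩
  induction n with
  | zero => simp
  | succ n ih =>
    intro i hi x hx hxsat
    have hdn : d * n ≤ d * (n + 1) := Nat.mul_le_mul_left d n.le_succ
    refine hC n i (by omega) x hx (ih i (by omega) x hx ?_) hxsat
    exact sat_mono (Ideal.pow_le_pow_right n.le_succ) _ hxsat

noncomputable def piecesLE (J : Ideal R) (L : ℕ) : Submodule k R :=
  (Finset.range (L + 1)).sup (piece 𝒜 J)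

theorem decompose_eq_zero_of_mem_finset_sup {s : Finset ℕ} {p : ℕ → Submodule k R}
    (hp : ∀ i, p i ≤ 𝒜 i) {x : R} (hx : x ∈ s.sup p) {j : ℕ} (hj : j ∉ s) :
    (decompose 𝒜 x j : R) = 0 := by
  have : s.sup p ≤ LinearMap.ker (GradedAlgebra.proj 𝒜 j) := Finset.sup_le fun i hi y hy => by
    simp [GradedAlgebra.proj_apply, decompose_of_mem_ne 𝒜 (hp i hy) (ne_of_mem_of_not_mem hi hj)]
  simpa [GradedAlgebra.proj_apply] using this hx

theorem mem_piecesLE_iff {J : Ideal R} (hJ : J.IsHomogeneous 𝒜) {L : ℕ} {x : R} :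
    x ∈ piecesLE 𝒜 J L ↔ x ∈ J ∧ ∀ j, L < j → (decompose 𝒜 x j : R) = 0 := by
  classical
  constructor
  · intro hx
    refine ⟨(Finset.sup_le (f := piece 𝒜 J) fun i _ => inf_le_left) hx, fun j hj =>
      decompose_eq_zero_of_mem_finset_sup 𝒜 (fun i => inf_le_right) hx (by simpa using hj)⟩
  · rintro ⟨hxJ, hx⟩
    rw [← sum_support_decompose 𝒜 x]
    refine sum_mem fun j hj => Finset.le_sup (f := piece 𝒜 J) (Finset.mem_range_succ_iff.mpr ?_)
      ⟨hJ j hxJ, SetLike.coe_mem _⟩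
    exact not_lt.mp fun hlt => DFinsupp.mem_support_iff.mp hj (Subtype.ext (hx j hlt))

theorem exists_mem_piecesLE_sub_mem {P Q : Ideal R} (hQ : Q.IsHomogeneous 𝒜) {L : ℕ}
    (hL : ∀ j, L < j → ∀ x ∈ 𝒜 j, x ∈ Q → x ∈ P) {v : R} (hv : v ∈ Q) :
    ∃ w ∈ piecesLE 𝒜 Q L, v - w ∈ P := by
  classical
  refine ⟨∑ j ∈ (decompose 𝒜 v).support.filter (· ≤ L), (decompose 𝒜 v j : R), ?_, ?_⟩
  · exact sum_mem fun j hj => Finset.le_sup (f := piece 𝒜 Q)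
      (Finset.mem_range_succ_iff.mpr (Finset.mem_filter.mp hj).2) ⟨hQ j hv, SetLike.coe_mem _⟩
  · have hsplit := Finset.sum_filter_add_sum_filter_not (decompose 𝒜 v).support (· ≤ L)
      fun j => (decompose 𝒜 v j : R)
    rw [sum_support_decompose] at hsplit
    nth_rw 1 [← hsplit]
    rw [add_sub_cancel_left]
    exact sum_mem fun j hj =>
      hL j (not_le.mp (Finset.mem_filter.mp hj).2) _ (SetLike.coe_mem _) (hQ j hv)

variable [∀ i, FiniteDimensional k (𝒜 i)]

instance (J : Ideal R) (i : ℕ) : FiniteDimensional k (piece 𝒜 J i) :=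
  Submodule.finiteDimensional_of_le inf_le_right

instance (J : Ideal R) (L : ℕ) : FiniteDimensional k (piecesLE 𝒜 J L) :=
  Submodule.finiteDimensional_finset_sup _ _

theorem finrank_piecesLE (J : Ideal R) (L : ℕ) :
    Module.finrank k (piecesLE 𝒜 J L) =
      ∑ i ∈ Finset.range (L + 1), Module.finrank k (piece 𝒜 J i) :=
  finrank_finset_sup_of_iSupIndep (p := piece 𝒜 J)
    ((Decomposition.isInternal 𝒜).submodule_iSupIndep.mono fun _ => inf_le_right) _

theorem finrank_H0_add_finrank_piecesLE {P J : Ideal R}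
    (hP : P.IsHomogeneous 𝒜) (hJ : J.IsHomogeneous 𝒜) {L : ℕ}
    (hL : ∀ j, L < j → ∀ x ∈ 𝒜 j, x ∈ sat P J → x ∈ P) :
    Module.finrank k (H0 (M := R ⧸ P) J) + Module.finrank k (piecesLE 𝒜 P L) =
      Module.finrank k (piecesLE 𝒜 (sat P J) L) := by
  have hQ := hP.sat 𝒜 hJ
  let φ : piecesLE 𝒜 (sat P J) L →ₗ[k] R ⧸ P :=
    (Ideal.Quotient.mkₐ k P).toLinearMap ∘ₗ Submodule.subtype _
  have hrange : LinearMap.range φ = (H0 (M := R ⧸ P) J).restrictScalars k := by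
    refine le_antisymm ?_ fun z hz => ?_
    · rintro _ ⟨⟨w, hw⟩, rfl⟩
      exact mk_mem_H0_iff.mpr ((mem_piecesLE_iff 𝒜 hQ).mp hw).1
    · obtain ⟨v, rfl⟩ := Ideal.Quotient.mk_surjective z
      obtain ⟨w, hw, hvw⟩ := exists_mem_piecesLE_sub_mem 𝒜 hQ hL (mk_mem_H0_iff.mp hz)
      exact ⟨⟨w, hw⟩, Ideal.Quotient.eq.mpr (by simpa using P.neg_mem hvw)⟩
  have hker : LinearMap.ker φ = (piecesLE 𝒜 P L).comap (Submodule.subtype _) := by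
    ext ⟨w, hw⟩
    simp only [LinearMap.mem_ker, Submodule.mem_comap, mem_piecesLE_iff 𝒜 hP]
    simpa [φ, Ideal.Quotient.eq_zero_iff_mem] using fun _ => ((mem_piecesLE_iff 𝒜 hQ).mp hw).2
  have hle : piecesLE 𝒜 P L ≤ piecesLE 𝒜 (sat P J) L :=
    Finset.sup_mono_fun fun i _ =>
      inf_le_inf_right _ (Submodule.restrictScalars_mono _ (le_sat P J))
  rw [← LinearMap.finrank_range_add_finrank_ker φ, hrange, hker,
    (Submodule.comapSubtypeEquivOfLe hle).finrank_eq]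
  -- `(H0 J).restrictScalars k` and `H0 J` carry the same `k`-module structure.
  rfl

end StandardGraded

theorem statement13_general (k : Type) [Field k]
    (R : Type) [CommRing R] [Algebra k R]
    (𝒜 : ℕ → Submodule k R) [GradedAlgebra 𝒜]
    -- `R` is a quotient of a polynomial ring by a homogeneous prime ideal
    (hFG : Algebra.FiniteType k R)
    (hstd : Algebra.adjoin k (𝒜 1 : Set R) = ⊤)
    (m : Ideal R) (hm : m = (HomogeneousIdeal.irrelevant 𝒜).toIdeal)
    -- a homogeneous ideal of height at least 1
    (I : Ideal R) (hI : I.IsHomogeneous 𝒜) :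
    ∃ e : ℕ, 0 < e ∧
      -- `e` exceeds the degrees of a set of homogeneous generators of `I`
      (∃ s : Finset R, (∀ f ∈ s, ∃ i < e, f ∈ 𝒜 i) ∧ I = Ideal.span ↑s) ∧
      -- `e` is at least the Swanson linear bound: `(Iⁿ)_m = ((Iⁿ)^*)_m` for `m ≥ en`
      (∀ n : ℕ, 1 ≤ n → ∀ i : ℕ, e * n ≤ i →
        piece 𝒜 (sat (I ^ n) m) i = piece 𝒜 (I ^ n) i) ∧
      -- the length formula
      (∀ n : ℕ, 1 ≤ n →
        (Module.finrank k (H0 (M := R ⧸ I ^ n) m) : ℤ) =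
          (∑ i ∈ Finset.range (e * n + 1),
            (Module.finrank k (piece 𝒜 (sat (I ^ n) m) i) : ℤ)) -
          (∑ i ∈ Finset.range (e * n + 1),
            (Module.finrank k (piece 𝒜 (I ^ n) i) : ℤ))) := by
  subst hm
  have : IsNoetherianRing R := Algebra.FiniteType.isNoetherianRing k R
  have := finiteDimensional_grade 𝒜 hstd
  obtain ⟨s, d, hs, hsd⟩ := hI.exists_finset_span_eq 𝒜 I.fg_of_isNoetherianRing
  obtain ⟨C, hC⟩ := exists_mem_pow_of_mem_sat 𝒜 hstd hsd
  rw [hs] at hC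
  have hsat (n : ℕ) (hn : 1 ≤ n) (j : ℕ) (hj : (d + C + 1) * n ≤ j) :
      ∀ x ∈ 𝒜 j, x ∈ sat (I ^ n) (𝒜₊).toIdeal → x ∈ I ^ n :=
    hC n j (by nlinarith)
  refine ⟨d + C + 1, by omega, ⟨s, fun f hf => ?_, hs.symm⟩, fun n hn i hi => ?_, fun n hn => ?_⟩
  · obtain ⟨δ, hδ, hf⟩ := hsd f hf
    exact ⟨δ, by omega, hf⟩
  · exact le_antisymm (fun x hx => ⟨hsat n hn i hi x hx.2 hx.1, hx.2⟩)
      (inf_le_inf_right _ (Submodule.restrictScalars_mono _ (le_sat _ _)))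
  · have h := finrank_H0_add_finrank_piecesLE 𝒜 (hI.pow 𝒜 n)
      (𝒜₊).isHomogeneous fun j hj => hsat n hn j hj.le
    rw [finrank_piecesLE, finrank_piecesLE] at h
    rw [← Nat.cast_sum, ← Nat.cast_sum, ← h]
    push_cast
    ring

theorem statement13 (k : Type) [Field k]
    (R : Type) [CommRing R] [IsDomain R] [Algebra k R]
    (𝒜 : ℕ → Submodule k R) [GradedAlgebra 𝒜]
    -- `R` is a quotient of a polynomial ring by a homogeneous prime ideal
    (hFG : Algebra.FiniteType k R)
    (hstd : Algebra.adjoin k (𝒜 1 : Set R) = ⊤)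
    (m : Ideal R) (hm : m = (HomogeneousIdeal.irrelevant 𝒜).toIdeal)
    -- `depth (R_m) ≥ 2`
    (hdepth : ∃ a b : R, a ∈ m ∧ b ∈ m ∧ RingTheory.Sequence.IsRegular R [a, b])
    -- a homogeneous ideal of height at least 1
    (I : Ideal R) (hI : I.IsHomogeneous 𝒜) (hht : 1 ≤ idealHeight I) :
    ∃ e : ℕ, 0 < e ∧
      -- `e` exceeds the degrees of a set of homogeneous generators of `I`
      (∃ s : Finset R, (∀ f ∈ s, ∃ i < e, f ∈ 𝒜 i) ∧ I = Ideal.span ↑s) ∧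
      -- `e` is at least the Swanson linear bound: `(Iⁿ)_m = ((Iⁿ)^*)_m` for `m ≥ en`
      (∀ n : ℕ, 1 ≤ n → ∀ i : ℕ, e * n ≤ i →
        piece 𝒜 (sat (I ^ n) m) i = piece 𝒜 (I ^ n) i) ∧
      -- the length formula
      (∀ n : ℕ, 1 ≤ n →
        (Module.finrank k (H0 (M := R ⧸ I ^ n) m) : ℤ) =
          (∑ i ∈ Finset.range (e * n + 1),
            (Module.finrank k (piece 𝒜 (sat (I ^ n) m) i) : ℤ)) -
          (∑ i ∈ Finset.range (e * n + 1),
            (Module.finrank k (piece 𝒜 (I ^ n) i) : ℤ))) :=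
  statement13_general k R 𝒜 hFG hstd m hm I hI
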